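/- Let n > 2 be a positive integer and ℓ any positive integer. The triple (n, n·ℓ, n(n-2)·ℓ) is not index-realizable if and only if n is odd and (n-1) does not divide 2ℓ. -/

import Mathlib

/-- A triple `(a, b, c)` of positive integers is index-realizable if there exists a group `G`
with finite-index subgroups `H` and `K` such that `a = [G : H]`, `b = [G : K]`, and
`c = [G : H ∩ K]`. -/
def IndexRealizable (a b c : ℕ) : Prop :=
  ∃ (G : Type) (_ : Group G) (H K : Subgroup G),
    H.index ≠ 0 ∧ K.index ≠ 0 ∧ H.index = a ∧ K.index = b ∧ (H ⊓ K).index = c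

open MulAction Equiv

structure EvT1 (m : ℕ) where
  i : Fin m
  u : ZMod 2

structure EvT2 (m l : ℕ) where
  i : Fin m
  u : ZMod 2
  t : ZMod l

abbrev EvG (m l : ℕ) :=
  Equiv.Perm (Fin m) × Multiplicative (ZMod 2) × Multiplicative (ZMod 2) × Multiplicative (ZMod l)

instance (m l : ℕ) : MulAction (EvG m l) (EvT1 m) where
  smul g x := ⟨g.1 x.i, g.2.1.toAdd + x.u⟩
  one_smul x := by cases x; simp [HSMul.hSMul, SMul.smul]
  mul_smul g h x := by
    cases x
    simp [HSMul.hSMul, SMul.smul, add_assoc]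

instance (m l : ℕ) : MulAction (EvG m l) (EvT2 m l) where
  smul g x := ⟨g.1 x.i, g.2.2.1.toAdd + x.u, g.2.2.2.toAdd + x.t⟩
  one_smul x := by cases x; simp [HSMul.hSMul, SMul.smul]
  mul_smul g h x := by
    cases x
    simp [HSMul.hSMul, SMul.smul, add_assoc]

lemma EvT1.smul_def {m l : ℕ} (g : EvG m l) (x : EvT1 m) :
    g • x = ⟨g.1 x.i, g.2.1.toAdd + x.u⟩ := rfl

lemma EvT2.smul_def {m l : ℕ} (g : EvG m l) (x : EvT2 m l) :
    g • x = ⟨g.1 x.i, g.2.2.1.toAdd + x.u, g.2.2.2.toAdd + x.t⟩ := rfl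
lemma exists_perm_two {α : Type*} [DecidableEq α] {a b c d : α} (hab : a ≠ b) (hcd : c ≠ d) :
    ∃ σ : Equiv.Perm α, σ a = c ∧ σ b = d := by
  refine ⟨Equiv.swap (Equiv.swap a c b) d * Equiv.swap a c, ?_, ?_⟩
  · have h1 : Equiv.swap a c b ≠ c := by
      intro h
      exact hab (Equiv.injective _ (h.trans (Equiv.swap_apply_left a c).symm)).symm
    simp only [Equiv.Perm.mul_apply, Equiv.swap_apply_left]
    exact Equiv.swap_apply_of_ne_of_ne (Ne.symm h1) hcd
  · simp only [Equiv.Perm.mul_apply, Equiv.swap_apply_left]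

lemma stabilizer_prod' {G α β : Type*} [Group G] [MulAction G α] [MulAction G β] (a : α) (b : β) :
    MulAction.stabilizer G (a, b) = MulAction.stabilizer G a ⊓ MulAction.stabilizer G b := by
  ext g
  simp [MulAction.mem_stabilizer_iff, Prod.ext_iff, Subgroup.mem_inf, Prod.smul_def]

lemma realizable_even (m l : ℕ) (hm : 2 ≤ m) (hl : 0 < l) :
    IndexRealizable (2 * m) (2 * m * l) (2 * m * (2 * m - 2) * l) := by
  haveI : NeZero l := ⟨hl.ne'⟩
  have m0 : 0 < m := by omega
  have m1 : 1 < m := by omega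
  set z : Fin m := ⟨0, m0⟩ with hz
  set w : Fin m := ⟨1, m1⟩ with hw
  have hzw : z ≠ w := by simp [hz, hw, Fin.ext_iff]
  set a1 : EvT1 m := ⟨z, 0⟩ with ha1
  set a2 : EvT2 m l := ⟨w, 0, 0⟩ with ha2
  -- cardinalities
  have cT1 : Nat.card (EvT1 m) = 2 * m := by
    have e : EvT1 m ≃ Fin m × ZMod 2 :=
      ⟨fun x => (x.i, x.u), fun p => ⟨p.1, p.2⟩, fun _ => rfl, fun _ => rfl⟩
    rw [Nat.card_congr e, Nat.card_prod, Nat.card_eq_fintype_card (α := Fin m),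
      Fintype.card_fin, Nat.card_zmod]
    omega
  have cT2 : Nat.card (EvT2 m l) = 2 * m * l := by
    have e : EvT2 m l ≃ Fin m × ZMod 2 × ZMod l :=
      ⟨fun x => (x.i, x.u, x.t), fun p => ⟨p.1, p.2.1, p.2.2⟩, fun _ => rfl, fun _ => rfl⟩
    rw [Nat.card_congr e, Nat.card_prod, Nat.card_prod, Nat.card_eq_fintype_card (α := Fin m),
      Fintype.card_fin, Nat.card_zmod, Nat.card_zmod]
    ring
  -- orbits
  have o1 : MulAction.orbit (EvG m l) a1 = Set.univ := by
    refine Set.eq_univ_of_forall fun x => MulAction.mem_orbit_iff.mpr ?_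
    refine ⟨(Equiv.swap z x.i, Multiplicative.ofAdd x.u, 1, 1), ?_⟩
    obtain ⟨i, u⟩ := x
    simp [EvT1.smul_def, ha1]
  have o2 : MulAction.orbit (EvG m l) a2 = Set.univ := by
    refine Set.eq_univ_of_forall fun x => MulAction.mem_orbit_iff.mpr ?_
    refine ⟨(Equiv.swap w x.i, 1, Multiplicative.ofAdd x.u, Multiplicative.ofAdd x.t), ?_⟩
    obtain ⟨i, u, t⟩ := x
    simp [EvT2.smul_def, ha2]
  have o12 : MulAction.orbit (EvG m l) (a1, a2)
      = {x : EvT1 m × EvT2 m l | x.1.i ≠ x.2.i} := by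
    ext x
    constructor
    · rintro ⟨g, rfl⟩
      simp only [Set.mem_setOf_eq, Prod.smul_def, EvT1.smul_def, EvT2.smul_def, ha1, ha2]
      exact fun h => hzw (g.1.injective h)
    · intro hx
      obtain ⟨σ, hσ1, hσ2⟩ := exists_perm_two hzw hx
      refine ⟨(σ, Multiplicative.ofAdd x.1.u, Multiplicative.ofAdd x.2.u,
        Multiplicative.ofAdd x.2.t), ?_⟩
      obtain ⟨⟨i1, u1⟩, ⟨i2, u2, t2⟩⟩ := x
      simp only [Prod.smul_def, EvT1.smul_def, EvT2.smul_def, ha1, ha2, Prod.mk.injEq]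
      simp_all [EvT1.mk.injEq, EvT2.mk.injEq]
  have cS : ({x : EvT1 m × EvT2 m l | x.1.i ≠ x.2.i}).ncard
      = (m * m - m) * (2 * (2 * l)) := by
    rw [← Nat.card_coe_set_eq]
    have e : {x : EvT1 m × EvT2 m l | x.1.i ≠ x.2.i}
        ≃ {p : Fin m × Fin m // p.1 ≠ p.2} × (ZMod 2 × ZMod 2 × ZMod l) :=
      ⟨fun x => (⟨(x.1.1.i, x.1.2.i), x.2⟩, (x.1.1.u, x.1.2.u, x.1.2.t)),
       fun y => ⟨(⟨y.1.1.1, y.2.1⟩, ⟨y.1.1.2, y.2.2.1, y.2.2.2⟩), y.1.2⟩,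
       fun _ => rfl, fun _ => rfl⟩
    rw [Nat.card_congr e, Nat.card_prod, Nat.card_prod, Nat.card_prod,
      Nat.card_zmod]
    have cd : Nat.card {p : Fin m × Fin m // p.1 ≠ p.2} = m * m - m := by
      rw [Nat.card_eq_fintype_card]
      have : Fintype.card {p : Fin m × Fin m // p.1 = p.2} = m := by
        rw [Fintype.card_eq_nat_card,
          Nat.card_congr (⟨fun q => q.1.1, fun i => ⟨(i, i), rfl⟩,
            fun q => by
              obtain ⟨⟨x, y⟩, h⟩ := q
              exact Subtype.ext (Prod.ext rfl h), fun _ => rfl⟩ :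
            {p : Fin m × Fin m // p.1 = p.2} ≃ Fin m),
          Nat.card_eq_fintype_card, Fintype.card_fin]
      calc Fintype.card {p : Fin m × Fin m // ¬ p.1 = p.2}
          = Fintype.card (Fin m × Fin m) - Fintype.card {p : Fin m × Fin m // p.1 = p.2} :=
            Fintype.card_subtype_compl _
        _ = m * m - m := by rw [this, Fintype.card_prod, Fintype.card_fin]
    rw [cd, Nat.card_zmod]
  refine ⟨EvG m l, inferInstance, MulAction.stabilizer _ a1, MulAction.stabilizer _ a2,
    ?_, ?_, ?_, ?_, ?_⟩
  · rw [MulAction.index_stabilizer, o1, Set.ncard_univ, cT1]; omega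
  · rw [MulAction.index_stabilizer, o2, Set.ncard_univ, cT2]
    have := Nat.mul_pos (by omega : 0 < 2 * m) hl
    omega
  · rw [MulAction.index_stabilizer, o1, Set.ncard_univ, cT1]
  · rw [MulAction.index_stabilizer, o2, Set.ncard_univ, cT2]
  · rw [← stabilizer_prod', MulAction.index_stabilizer, o12, cS]
    have h1 : m ≤ m * m := Nat.le_mul_of_pos_left m m0
    have h2 : 2 ≤ 2 * m := by omega
    zify [h1, h2]
    ring

lemma exists_perm_three {α : Type*} [DecidableEq α] {a b c a' b' c' : α}
    (hab : a ≠ b) (hac : a ≠ c) (hbc : b ≠ c)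
    (hab' : a' ≠ b') (hac' : a' ≠ c') (hbc' : b' ≠ c') :
    ∃ σ : Equiv.Perm α, σ a = a' ∧ σ b = b' ∧ σ c = c' := by
  obtain ⟨σ₁, h1, h2⟩ := exists_perm_two hab hab'
  refine ⟨Equiv.swap (σ₁ c) c' * σ₁, ?_, ?_, ?_⟩
  · simp only [Equiv.Perm.mul_apply, h1]
    refine Equiv.swap_apply_of_ne_of_ne ?_ hac'
    rw [← h1]; exact fun h => hac (σ₁.injective h)
  · simp only [Equiv.Perm.mul_apply, h2]
    refine Equiv.swap_apply_of_ne_of_ne ?_ hbc'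
    rw [← h2]; exact fun h => hbc (σ₁.injective h)
  · simp only [Equiv.Perm.mul_apply, Equiv.swap_apply_left]

structure OdU1 (n : ℕ) where
  i : Fin n

structure OdU2 (n t : ℕ) where
  s : Finset (Fin n)
  c : ZMod t

abbrev OdG (n t : ℕ) := Equiv.Perm (Fin n) × Multiplicative (ZMod t)

instance (n t : ℕ) : MulAction (OdG n t) (OdU1 n) where
  smul g x := ⟨g.1 x.i⟩
  one_smul x := by cases x; simp [HSMul.hSMul, SMul.smul]
  mul_smul g h x := by cases x; simp [HSMul.hSMul, SMul.smul]

instance (n t : ℕ) : MulAction (OdG n t) (OdU2 n t) where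
  smul g x := ⟨x.s.image g.1, g.2.toAdd + x.c⟩
  one_smul x := by
    cases x
    simp [HSMul.hSMul, SMul.smul, Finset.image_id']
  mul_smul g h x := by
    cases x
    simp [HSMul.hSMul, SMul.smul, Finset.image_image, add_assoc, Function.comp_def,
      Equiv.Perm.mul_apply]

lemma OdU1.smul_def {n t : ℕ} (g : OdG n t) (x : OdU1 n) : g • x = ⟨g.1 x.i⟩ := rfl

lemma OdU2.smul_def {n t : ℕ} (g : OdG n t) (x : OdU2 n t) :
    g • x = ⟨x.s.image g.1, g.2.toAdd + x.c⟩ := rfl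


lemma realizable_pairs (n t : ℕ) (hn : 3 ≤ n) (ht : 0 < t) :
    IndexRealizable n (n.choose 2 * t) (n.choose 2 * ((n - 2) * t)) := by
  haveI : NeZero t := ⟨ht.ne'⟩
  have h0 : (0 : ℕ) < n := by omega
  have h1 : (1 : ℕ) < n := by omega
  have h2 : (2 : ℕ) < n := by omega
  set x0 : Fin n := ⟨0, h0⟩
  set y0 : Fin n := ⟨1, h1⟩
  set z0 : Fin n := ⟨2, h2⟩
  have hxy : x0 ≠ y0 := by simp [x0, y0, Fin.ext_iff]
  have hxz : x0 ≠ z0 := by simp [x0, z0, Fin.ext_iff]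
  have hyz : y0 ≠ z0 := by simp [y0, z0, Fin.ext_iff]
  set b1 : OdU1 n := ⟨z0⟩ with hb1
  set b2 : OdU2 n t := ⟨{x0, y0}, 0⟩ with hb2
  have hcard2 : ({x0, y0} : Finset (Fin n)).card = 2 := by
    rw [Finset.card_insert_of_notMem (by simp [hxy]), Finset.card_singleton]
  have choose_pos : 0 < n.choose 2 := Nat.choose_pos (by omega)
  -- orbit of b1
  have o1 : MulAction.orbit (OdG n t) b1 = Set.univ := by
    refine Set.eq_univ_of_forall fun x => MulAction.mem_orbit_iff.mpr ?_
    refine ⟨(Equiv.swap z0 x.i, 1), ?_⟩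
    obtain ⟨i⟩ := x
    simp [OdU1.smul_def, hb1]
  have cU1 : Nat.card (OdU1 n) = n := by
    have e : OdU1 n ≃ Fin n := ⟨fun x => x.i, fun i => ⟨i⟩, fun _ => rfl, fun _ => rfl⟩
    rw [Nat.card_congr e, Nat.card_eq_fintype_card, Fintype.card_fin]
  -- orbit of b2
  have o2 : MulAction.orbit (OdG n t) b2 = {b : OdU2 n t | b.s.card = 2} := by
    ext b
    constructor
    · rintro ⟨g, rfl⟩
      simp only [Set.mem_setOf_eq, OdU2.smul_def, hb2]
      rw [Finset.card_image_of_injective _ g.1.injective, hcard2]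
    · intro hb
      obtain ⟨c₁, c₂, hc, hs⟩ := Finset.card_eq_two.mp hb
      obtain ⟨σ, hσ1, hσ2⟩ := exists_perm_two hxy hc
      refine ⟨(σ, Multiplicative.ofAdd b.c), ?_⟩
      obtain ⟨s, c⟩ := b
      simp only [OdU2.smul_def, hb2, Finset.image_insert, Finset.image_singleton, hσ1, hσ2]
      simp_all [OdU2.mk.injEq]
  have cO2 : ({b : OdU2 n t | b.s.card = 2}).ncard = n.choose 2 * t := by
    rw [← Nat.card_coe_set_eq]
    have e : {b : OdU2 n t | b.s.card = 2} ≃ {s : Finset (Fin n) // s.card = 2} × ZMod t :=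
      ⟨fun b => (⟨b.1.s, b.2⟩, b.1.c), fun y => ⟨⟨y.1.1, y.2⟩, y.1.2⟩,
       fun _ => rfl, fun _ => rfl⟩
    rw [Nat.card_congr e, Nat.card_prod, Nat.card_zmod, Nat.card_eq_fintype_card,
      Fintype.card_finset_len, Fintype.card_fin]
  -- orbit of the pair
  have o12 : MulAction.orbit (OdG n t) (b1, b2)
      = {x : OdU1 n × OdU2 n t | x.2.s.card = 2 ∧ x.1.i ∉ x.2.s} := by
    ext x
    constructor
    · rintro ⟨g, rfl⟩
      simp only [Set.mem_setOf_eq, Prod.smul_def, OdU1.smul_def, OdU2.smul_def, hb1, hb2]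
      constructor
      · rw [Finset.card_image_of_injective _ g.1.injective, hcard2]
      · intro hmem
        obtain ⟨a, ha, hEq⟩ := Finset.mem_image.mp hmem
        have : a = z0 := g.1.injective hEq
        subst this
        rcases Finset.mem_insert.mp ha with h | h
        · exact hxz (h.symm)
        · exact hyz ((Finset.mem_singleton.mp h).symm)
    · rintro ⟨hc2, hnm⟩
      obtain ⟨c₁, c₂, hc, hs⟩ := Finset.card_eq_two.mp hc2
      have hic₁ : x.1.i ≠ c₁ := fun h => hnm (by rw [hs, h]; simp)
      have hic₂ : x.1.i ≠ c₂ := fun h => hnm (by rw [hs, h]; simp)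
      obtain ⟨σ, hσ1, hσ2, hσ3⟩ := exists_perm_three hxy hxz hyz hc hic₁.symm hic₂.symm
      refine ⟨(σ, Multiplicative.ofAdd x.2.c), ?_⟩
      obtain ⟨⟨i⟩, ⟨s, c⟩⟩ := x
      simp only [Prod.smul_def, OdU1.smul_def, OdU2.smul_def, hb1, hb2, Prod.mk.injEq,
        Finset.image_insert, Finset.image_singleton, hσ1, hσ2, hσ3]
      simp_all [OdU1.mk.injEq, OdU2.mk.injEq]
  have cO12 : ({x : OdU1 n × OdU2 n t | x.2.s.card = 2 ∧ x.1.i ∉ x.2.s}).ncard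
      = n.choose 2 * ((n - 2) * t) := by
    rw [← Nat.card_coe_set_eq]
    have e : {x : OdU1 n × OdU2 n t | x.2.s.card = 2 ∧ x.1.i ∉ x.2.s}
        ≃ Σ s : {s : Finset (Fin n) // s.card = 2}, ({i : Fin n // i ∉ s.1} × ZMod t) :=
      ⟨fun x => ⟨⟨x.1.2.s, x.2.1⟩, ⟨x.1.1.i, x.2.2⟩, x.1.2.c⟩,
       fun y => ⟨(⟨y.2.1.1⟩, ⟨y.1.1, y.2.2⟩), y.1.2, y.2.1.2⟩,
       fun _ => rfl, fun _ => rfl⟩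
    rw [Nat.card_congr e, Nat.card_eq_fintype_card, Fintype.card_sigma]
    have hfiber : ∀ s : {s : Finset (Fin n) // s.card = 2},
        Fintype.card ({i : Fin n // i ∉ s.1} × ZMod t) = (n - 2) * t := by
      intro s
      rw [Fintype.card_prod, Fintype.card_subtype_compl]
      congr 1
      · congr 1
        · exact Fintype.card_fin n
        · exact (Fintype.card_coe _).trans s.2
      · rw [← Nat.card_eq_fintype_card, Nat.card_zmod]
    rw [Finset.sum_congr rfl fun s _ => hfiber s, Finset.sum_const, smul_eq_mul,
      Finset.card_univ, Fintype.card_finset_len, Fintype.card_fin]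
  refine ⟨OdG n t, inferInstance, MulAction.stabilizer _ b1, MulAction.stabilizer _ b2,
    ?_, ?_, ?_, ?_, ?_⟩
  · rw [MulAction.index_stabilizer, o1, Set.ncard_univ, cU1]; omega
  · rw [MulAction.index_stabilizer, o2, cO2]
    exact Nat.mul_ne_zero choose_pos.ne' ht.ne'
  · rw [MulAction.index_stabilizer, o1, Set.ncard_univ, cU1]
  · rw [MulAction.index_stabilizer, o2, cO2]
  · rw [← stabilizer_prod', MulAction.index_stabilizer, o12, cO12]


variable {G : Type*} [Group G] {X : Type*} [MulAction G X]

lemma stabilizer_subgroupOf (L : Subgroup G) (x : X) :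
    MulAction.stabilizer L x = (MulAction.stabilizer G x).subgroupOf L := by
  ext g
  rw [MulAction.mem_stabilizer_iff, Subgroup.mem_subgroupOf, MulAction.mem_stabilizer_iff]
  exact Iff.rfl

lemma stabilizer_subgroupOf_quot {G : Type} [Group G] (H L : Subgroup G) (x : G ⧸ H) :
    MulAction.stabilizer L x = (MulAction.stabilizer G x).subgroupOf L := by
  ext g
  rw [MulAction.mem_stabilizer_iff, Subgroup.mem_subgroupOf, MulAction.mem_stabilizer_iff]
  exact Iff.rfl

lemma orbit_mono_subgroup {L L' : Subgroup G} (h : L ≤ L') (x : X) :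
    MulAction.orbit L x ⊆ MulAction.orbit L' x := by
  rintro _ ⟨⟨g, hg⟩, rfl⟩
  exact ⟨⟨g, h hg⟩, rfl⟩

lemma even_card_of_involution {Y : Type*} [Finite Y] (f : Y → Y)
    (h2 : ∀ y, f (f y) = y) (hne : ∀ y, f y ≠ y) : Even (Nat.card Y) := by
  classical
  let e : Equiv.Perm Y := ⟨f, f, h2, h2⟩
  have he2 : e ^ 2 = 1 := by
    ext y
    simp [e, pow_succ, h2]
  have hp : IsPGroup 2 (Subgroup.zpowers e) := by
    rintro ⟨g, hg⟩
    refine ⟨1, ?_⟩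
    obtain ⟨k, rfl⟩ := Subgroup.mem_zpowers_iff.mp hg
    ext : 1
    push_cast
    rw [← zpow_natCast, ← zpow_mul, mul_comm, zpow_mul, zpow_natCast, he2, one_zpow]
  have hfix : MulAction.fixedPoints (Subgroup.zpowers e) Y = ∅ := by
    ext y
    simp only [Set.mem_empty_iff_false, iff_false, MulAction.mem_fixedPoints]
    intro hy
    exact hne y (hy ⟨e, Subgroup.mem_zpowers e⟩)
  have hmod := hp.card_modEq_card_fixedPoints Y
  rw [hfix] at hmod
  have hz : Nat.card (∅ : Set Y) = 0 := by simp
  rw [hz] at hmod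
  have := Nat.modEq_zero_iff_dvd.mp hmod
  exact (even_iff_two_dvd).mpr this

lemma even_card_of_stabilizer_pair [Finite X] [MulAction.IsPretransitive G X]
    {p q : X} (hpq : p ≠ q) (hQP : MulAction.stabilizer G q = MulAction.stabilizer G p)
    (huniq : ∀ y : X, MulAction.stabilizer G y = MulAction.stabilizer G p → y = p ∨ y = q) :
    Even (Nat.card X) := by
  classical
  have key : ∀ (g : G) (x y : X), MulAction.stabilizer G x = MulAction.stabilizer G y →
      MulAction.stabilizer G (g • x) = MulAction.stabilizer G (g • y) := by
    intro g x y h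
    rw [MulAction.stabilizer_smul_eq_stabilizer_map_conj,
      MulAction.stabilizer_smul_eq_stabilizer_map_conj g y, h]
  have hex : ∀ x : X, ∃ g : G, g • p = x := fun x => MulAction.exists_smul_eq G p x
  choose gg hgg using hex
  set f : X → X := fun x => gg x • q with hf
  have hstab : ∀ x, MulAction.stabilizer G (f x) = MulAction.stabilizer G x := by
    intro x
    have := key (gg x) q p hQP
    rw [hgg x] at this
    exact this
  have hne : ∀ x, f x ≠ x := by
    intro x h
    have : gg x • q = gg x • p := by rw [hgg x]; exact h
    exact hpq (MulAction.injective (gg x) this.symm)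
  have hinv : ∀ x, f (f x) = x := by
    intro x
    set g := gg x with hgdef
    set h := gg (f x) with hhdef
    have hhp : h • p = f x := hgg (f x)
    have hfx : f x = g • q := rfl
    have s1 : MulAction.stabilizer G ((g⁻¹ * h) • q) = MulAction.stabilizer G p := by
      rw [mul_smul]
      have t1 : MulAction.stabilizer G (h • q) = MulAction.stabilizer G (h • p) :=
        key h q p hQP
      have t2 := key g⁻¹ (h • q) (h • p) t1
      rw [t2, hhp, hfx, inv_smul_smul]
      exact hQP
    have s2 : MulAction.stabilizer G ((g⁻¹ * h) • p) = MulAction.stabilizer G p := by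
      have t1 : MulAction.stabilizer G ((g⁻¹ * h) • p) = MulAction.stabilizer G ((g⁻¹ * h) • q) :=
        key (g⁻¹ * h) p q hQP.symm
      rw [t1, s1]
    rcases huniq _ s1 with hc | hc
    · -- (g⁻¹ h) • q = p, so h • q = g • p = x
      show h • q = x
      have : h • q = g • p := by
        have := congrArg (fun y => g • y) hc
        simpa [mul_smul] using this
      rw [this, hgg x]
    · -- (g⁻¹ h) • q = q; derive contradiction
      exfalso
      rcases huniq _ s2 with hd | hd
      · -- (g⁻¹ h) • p = p → h • p = g • p → f x = x
        have : h • p = g • p := by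
          have := congrArg (fun y => g • y) hd
          simpa [mul_smul] using this
        rw [hhp, hgg x] at this
        exact hne x this
      · -- (g⁻¹ h) • p = q = (g⁻¹ h) • q
        have : (g⁻¹ * h) • p = (g⁻¹ * h) • q := by rw [hd, hc]
        exact hpq (MulAction.injective (g⁻¹ * h) this)
  exact even_card_of_involution f hinv hne

lemma obstruction {G : Type} [Group G] (H K : Subgroup G) {n l : ℕ} (hn : 2 < n) (hl : 0 < l)
    (hodd : Odd n) (hH : H.index = n) (hK : K.index = n * l)
    (hHK : (H ⊓ K).index = n * (n - 2) * l) :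
    (n - 1) ∣ 2 * l := by
  classical
  obtain ⟨m, hm⟩ := hodd
  have hnl : 0 < n * l := Nat.mul_pos (by omega) hl
  haveI finX : Finite (G ⧸ H) := by
    apply Nat.finite_of_card_ne_zero
    rw [← Subgroup.index_eq_card, hH]
    omega
  have cX : Nat.card (G ⧸ H) = n := by rw [← Subgroup.index_eq_card, hH]
  set x₀ : G ⧸ H := ((1 : G) : G ⧸ H) with hx₀
  have stabx₀ : MulAction.stabilizer G x₀ = H := MulAction.stabilizer_quotient H
  -- the K-orbit of x₀ has n - 2 elements
  have rKH : H.relIndex K = n - 2 := by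
    have h1 := Subgroup.relIndex_mul_index (inf_le_right : H ⊓ K ≤ K)
    rw [Subgroup.inf_relIndex_right, hK, hHK] at h1
    have h2 : n * (n - 2) * l = (n - 2) * (n * l) := by ring
    rw [h2] at h1
    exact Nat.eq_of_mul_eq_mul_right hnl h1
  set Ω : Set (G ⧸ H) := MulAction.orbit K x₀ with hΩ
  have cΩ : Ω.ncard = n - 2 := by
    rw [hΩ, ← MulAction.index_stabilizer, stabilizer_subgroupOf_quot, stabx₀]
    exact rKH
  have x₀Ω : x₀ ∈ Ω := MulAction.mem_orbit_self x₀
  -- complement of Ω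
  have hcompl : Ωᶜ.ncard = 2 := by
    have h := Set.ncard_add_ncard_compl Ω
    rw [cΩ, cX] at h
    omega
  obtain ⟨p, q, hpq, hpqset⟩ := Set.ncard_eq_two.mp hcompl
  have hpΩ : p ∉ Ω := by
    have : p ∈ Ωᶜ := by rw [hpqset]; exact Set.mem_insert _ _
    exact this
  have hqΩ : q ∉ Ω := by
    have : q ∈ Ωᶜ := by rw [hpqset]; exact Set.mem_insert_iff.mpr (Or.inr rfl)
    exact this
  have hΩc : ∀ v : G ⧸ H, v ∉ Ω → v = p ∨ v = q := by
    intro v hv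
    have : v ∈ Ωᶜ := hv
    rw [hpqset] at this
    exact this
  -- K-orbits of points outside Ω stay outside Ω
  have horbK : ∀ v : G ⧸ H, v ∉ Ω → MulAction.orbit K v ⊆ {p, q} := by
    intro v hv u hu
    have huΩ : u ∉ Ω := by
      intro huΩ
      apply hv
      have h1 : MulAction.orbit K u = Ω := MulAction.orbit_eq_iff.mpr huΩ
      have h2 : MulAction.orbit K u = MulAction.orbit K v := MulAction.orbit_eq_iff.mpr hu
      rw [← h1, h2]
      exact MulAction.mem_orbit_self v
    rcases hΩc u huΩ with h | h
    · exact Or.inl h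
    · exact Or.inr h
  set P : Subgroup G := MulAction.stabilizer G p with hP
  have hPidx : P.index = n := by
    rw [hP, MulAction.index_stabilizer_of_transitive, cX]
  -- three orbit cardinalities
  set e : ℕ := Nat.card (MulAction.orbit K p) with hedef
  set θ : ℕ := Nat.card (MulAction.orbit (K ⊓ P : Subgroup G) x₀) with hθdef
  set d : ℕ := Nat.card (MulAction.orbit (K ⊓ H : Subgroup G) p) with hddef
  have he : P.relIndex K = e := by
    rw [hedef, Nat.card_coe_set_eq, ← MulAction.index_stabilizer,
      stabilizer_subgroupOf_quot, ← hP]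
    rfl
  have hθ : H.relIndex (K ⊓ P) = θ := by
    rw [hθdef, Nat.card_coe_set_eq, ← MulAction.index_stabilizer,
      stabilizer_subgroupOf_quot, stabx₀]
    rfl
  have hd : P.relIndex (K ⊓ H) = d := by
    rw [hddef, Nat.card_coe_set_eq, ← MulAction.index_stabilizer,
      stabilizer_subgroupOf_quot, ← hP]
    rfl
  -- bounds
  have hel : 1 ≤ e := by
    rw [hedef]
    haveI : Nonempty (MulAction.orbit K p) := ⟨⟨p, MulAction.mem_orbit_self p⟩⟩
    exact Nat.card_pos
  have heu : e ≤ 2 := by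
    rw [hedef, Nat.card_coe_set_eq]
    calc (MulAction.orbit K p).ncard ≤ ({p, q} : Set (G ⧸ H)).ncard :=
          Set.ncard_le_ncard (horbK p hpΩ) (Set.toFinite _)
      _ = 2 := Set.ncard_pair hpq
  have hdl : 1 ≤ d := by
    rw [hddef]
    haveI : Nonempty (MulAction.orbit (K ⊓ H : Subgroup G) p) :=
      ⟨⟨p, MulAction.mem_orbit_self p⟩⟩
    exact Nat.card_pos
  have hdu : d ≤ 2 := by
    rw [hddef, Nat.card_coe_set_eq]
    calc (MulAction.orbit (K ⊓ H : Subgroup G) p).ncard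
        ≤ ({p, q} : Set (G ⧸ H)).ncard := by
          apply Set.ncard_le_ncard _ (Set.toFinite _)
          exact fun u hu => horbK p hpΩ (orbit_mono_subgroup inf_le_left p hu)
      _ = 2 := Set.ncard_pair hpq
  have hΘΩ : MulAction.orbit (K ⊓ P : Subgroup G) x₀ ⊆ Ω :=
    orbit_mono_subgroup inf_le_left x₀
  have hθu : θ ≤ n - 2 := by
    rw [hθdef, Nat.card_coe_set_eq, ← cΩ]
    exact Set.ncard_le_ncard hΘΩ (Set.toFinite _)
  -- the key counting identity θ * e = d * (n - 2)
  have hWle1 : H ⊓ (K ⊓ P) ≤ K ⊓ P := inf_le_right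
  have hWle2 : K ⊓ P ≤ K := inf_le_left
  have chain1 := Subgroup.relIndex_mul_relIndex _ _ _ hWle1 hWle2
  have hKPK : (K ⊓ P).relIndex K = e := by
    rw [← he, inf_comm K P, Subgroup.inf_relIndex_right]
  have hre1 : (H ⊓ (K ⊓ P)).relIndex (K ⊓ P) = θ := by
    rw [Subgroup.inf_relIndex_right, hθ]
  rw [hre1, hKPK] at chain1
  -- chain1 : θ * e = (H ⊓ (K ⊓ P)).relindex K
  have hWle3 : H ⊓ (K ⊓ P) ≤ K ⊓ H := by
    refine le_inf (le_trans inf_le_right inf_le_left) inf_le_left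
  have hWle4 : K ⊓ H ≤ K := inf_le_left
  have chain2 := Subgroup.relIndex_mul_relIndex _ _ _ hWle3 hWle4
  have hre2 : (H ⊓ (K ⊓ P)).relIndex (K ⊓ H) = d := by
    have hWeq : H ⊓ (K ⊓ P) = P ⊓ (K ⊓ H) := by
      apply le_antisymm
      · exact le_inf (inf_le_right.trans inf_le_right)
          (le_inf (inf_le_right.trans inf_le_left) inf_le_left)
      · exact le_inf (inf_le_right.trans inf_le_right)
          (le_inf (inf_le_right.trans inf_le_left) inf_le_left)
    rw [hWeq, Subgroup.inf_relIndex_right, hd]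
  have hKHK : (K ⊓ H).relIndex K = n - 2 := by
    rw [inf_comm K H, Subgroup.inf_relIndex_right, rKH]
  rw [hre2, hKHK] at chain2
  have hkey : θ * e = d * (n - 2) := by rw [chain1, chain2]
  -- conclude θ = n - 2
  have hθeq : θ = n - 2 := by
    have he12 : e = 1 ∨ e = 2 := by omega
    have hd12 : d = 1 ∨ d = 2 := by omega
    rcases he12 with h | h <;> rcases hd12 with h' | h' <;>
      rw [h, h'] at hkey <;> omega
  -- hence Ω is the (K ⊓ P)-orbit of x₀, so Ω ⊆ Δ
  have hΘeq : MulAction.orbit (K ⊓ P : Subgroup G) x₀ = Ω := by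
    apply Set.eq_of_subset_of_ncard_le hΘΩ _ (Set.toFinite _)
    apply le_of_eq
    rw [cΩ, ← hθeq, hθdef, Nat.card_coe_set_eq]
  set Δ : Set (G ⧸ H) := MulAction.orbit (P : Subgroup G) x₀ with hΔ
  have hΩΔ : Ω ⊆ Δ := by
    rw [← hΘeq]
    exact orbit_mono_subgroup inf_le_right x₀
  have horbPp : MulAction.orbit (P : Subgroup G) p ⊆ {p} := by
    rintro _ ⟨⟨g, hg⟩, rfl⟩
    exact hg
  have hpΔ : p ∉ Δ := by
    intro hpΔ
    have : x₀ ∈ MulAction.orbit (P : Subgroup G) p := by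
      rw [MulAction.orbit_eq_iff.mpr hpΔ]
      exact MulAction.mem_orbit_self x₀
    have : x₀ = p := horbPp this
    rw [← this] at hpΩ
    exact hpΩ x₀Ω
  by_cases hqΔ : q ∈ Δ
  · -- main divisibility case
    have cΔ : Δ.ncard = n - 1 := by
      have hsub : insert q Ω ⊆ Δ := by
        intro u hu
        rcases Set.mem_insert_iff.mp hu with rfl | hu
        · exact hqΔ
        · exact hΩΔ hu
      have hsub2 : Δ ⊆ {p}ᶜ := by
        intro u hu hup
        rw [Set.mem_singleton_iff] at hup
        exact hpΔ (hup ▸ hu)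
      have c1 : (insert q Ω).ncard = n - 1 := by
        rw [Set.ncard_insert_of_notMem hqΩ (Set.toFinite _), cΩ]
        omega
      have c2 : ({p}ᶜ : Set (G ⧸ H)).ncard = n - 1 := by
        have h := Set.ncard_add_ncard_compl ({p} : Set (G ⧸ H))
        rw [Set.ncard_singleton, cX] at h
        omega
      have l1 : n - 1 ≤ Δ.ncard := by
        rw [← c1]; exact Set.ncard_le_ncard hsub (Set.toFinite _)
      have l2 : Δ.ncard ≤ n - 1 := by
        rw [← c2]; exact Set.ncard_le_ncard hsub2 (Set.toFinite _)
      omega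
    -- index of stabilizer of x₀ in P is n - 1
    have hAidx : (MulAction.stabilizer (P : Subgroup G) x₀).index = n - 1 := by
      rw [MulAction.index_stabilizer, ← hΔ, cΔ]
    have hA : MulAction.stabilizer (P : Subgroup G) x₀ = H.subgroupOf P := by
      rw [stabilizer_subgroupOf_quot, stabx₀]
    -- the subgroup W = H ⊓ (K ⊓ P) inside P
    have hWleP : H ⊓ (K ⊓ P) ≤ P := le_trans inf_le_right inf_le_right
    have hDleA : (H ⊓ (K ⊓ P)).subgroupOf P ≤ H.subgroupOf P := by
      intro g hg
      rw [Subgroup.mem_subgroupOf] at hg ⊢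
      exact hg.1
    have hdvd0 : (n - 1) ∣ ((H ⊓ (K ⊓ P)).subgroupOf P).index := by
      rw [← hAidx, hA]
      exact Subgroup.index_dvd_of_le hDleA
    -- compute that index
    have hWidx : (H ⊓ (K ⊓ P)).index = d * (n * (n - 2) * l) := by
      have h1 := Subgroup.relIndex_mul_index hWle3
      rw [hre2] at h1
      have h2 : (K ⊓ H).index = n * (n - 2) * l := by rw [inf_comm K H, hHK]
      rw [h2] at h1
      exact h1.symm
    have hrelP : (H ⊓ (K ⊓ P)).relIndex P = d * ((n - 2) * l) := by
      have h1 := Subgroup.relIndex_mul_index hWleP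
      rw [hPidx, hWidx] at h1
      have h2 : d * (n * (n - 2) * l) = (d * ((n - 2) * l)) * n := by ring
      rw [h2] at h1
      exact Nat.eq_of_mul_eq_mul_right (by omega) h1
    have hdvd1 : (n - 1) ∣ d * ((n - 2) * l) := by
      rw [← hrelP]
      exact hdvd0
    have hcop : Nat.Coprime (n - 1) (n - 2) := by
      have h2 : n - 1 = (n - 2) + 1 := by omega
      rw [h2]
      simp
    have hdvd2 : (n - 1) ∣ d * l := by
      have h3 : d * ((n - 2) * l) = (d * l) * (n - 2) := by ring
      rw [h3] at hdvd1
      exact hcop.dvd_of_dvd_mul_right hdvd1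
    have hd12 : d = 1 ∨ d = 2 := by omega
    rcases hd12 with h | h
    · rw [h, one_mul] at hdvd2
      exact hdvd2.trans ⟨2, by ring⟩
    · rw [h] at hdvd2
      exact hdvd2
  · -- q ∉ Δ : contradiction cases
    -- first, P fixes q
    have horbPq : MulAction.orbit (P : Subgroup G) q ⊆ {q} := by
      intro u hu
      have huΩ : u ∉ Ω := by
        intro huΩ
        apply hqΔ
        have h1 : MulAction.orbit (P : Subgroup G) u = Δ :=
          MulAction.orbit_eq_iff.mpr (hΩΔ huΩ)
        have h2 : MulAction.orbit (P : Subgroup G) u = MulAction.orbit (P : Subgroup G) q :=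
          MulAction.orbit_eq_iff.mpr hu
        rw [← h1, h2]
        exact MulAction.mem_orbit_self q
      have hup : u ≠ p := by
        intro hup
        have horb2 : MulAction.orbit (P : Subgroup G) p = MulAction.orbit (P : Subgroup G) q := by
          rw [← hup]
          exact MulAction.orbit_eq_iff.mpr hu
        have hq' : q ∈ MulAction.orbit (P : Subgroup G) p := by
          rw [horb2]
          exact MulAction.mem_orbit_self q
        exact hpq (horbPp hq').symm
      rcases hΩc u huΩ with h | h
      · exact absurd h hup
      · exact h
    have hPleQ : P ≤ MulAction.stabilizer G q := by
      intro g hg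
      have : (⟨g, hg⟩ : (P : Subgroup G)) • q ∈ MulAction.orbit (P : Subgroup G) q :=
        MulAction.mem_orbit _ _
      have h2 := horbPq this
      exact h2
    have hQidx : (MulAction.stabilizer G q).index = n := by
      rw [MulAction.index_stabilizer_of_transitive, cX]
    have hQP : MulAction.stabilizer G q = P := by
      have h1 := Subgroup.relIndex_mul_index hPleQ
      rw [hQidx, hPidx] at h1
      have h2 : P.relIndex (MulAction.stabilizer G q) = 1 := by
        have hn0 : 0 < n := by omega
        have h1' : P.relIndex (MulAction.stabilizer G q) * n = 1 * n := by
          rw [one_mul]; exact h1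
        exact Nat.eq_of_mul_eq_mul_right hn0 h1'
      have h3 : MulAction.stabilizer G q ≤ P := by
        rw [Subgroup.relIndex, Subgroup.index_eq_one, Subgroup.subgroupOf_eq_top] at h2
        exact h2
      exact le_antisymm h3 hPleQ
    by_cases hr : ∃ r : G ⧸ H, MulAction.stabilizer G r = P ∧ r ≠ p ∧ r ≠ q
    · obtain ⟨r, hrstab, hrp, hrq⟩ := hr
      have hrΩ : r ∈ Ω := by
        by_contra hrΩ
        rcases hΩc r hrΩ with h | h
        · exact hrp h
        · exact hrq h
      have horbr : MulAction.orbit K r = Ω := MulAction.orbit_eq_iff.mpr hrΩ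
      have hcard : Nat.card (MulAction.orbit K r) = e := by
        rw [Nat.card_coe_set_eq, ← MulAction.index_stabilizer,
          stabilizer_subgroupOf_quot, hrstab]
        exact he
      rw [horbr] at hcard
      have : n - 2 = e := by
        rw [← cΩ, ← Nat.card_coe_set_eq, hcard]
      have hn3 : n = 3 := by omega
      subst hn3
      exact Dvd.intro l rfl
    · push_neg at hr
      have hEven : Even (Nat.card (G ⧸ H)) := by
        apply even_card_of_stabilizer_pair hpq (hP ▸ hQP)
        intro y hy
        by_contra hcon
        push_neg at hcon
        exact hcon.2 (hr y (hP ▸ hy) hcon.1)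
      rw [cX] at hEven
      obtain ⟨k, hk⟩ := hEven
      omega


theorem not_indexRealizable_n_nl_n_mul_sub_two_mul_iff (n l : ℕ) (hn : 2 < n) (hl : 0 < l) :
    ¬ IndexRealizable n (n * l) (n * (n - 2) * l) ↔ Odd n ∧ ¬ (n - 1) ∣ 2 * l := by
  constructor
  · intro hnr
    by_contra hcon
    apply hnr
    rcases Nat.even_or_odd n with heven | hodd
    · obtain ⟨m, hm⟩ := heven
      have hm2 : 2 ≤ m := by omega
      have hn2 : n = 2 * m := by omega
      rw [hn2]
      exact realizable_even m l hm2 hl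
    · have hdvd : (n - 1) ∣ 2 * l := by
        by_contra hnd
        exact hcon ⟨hodd, hnd⟩
      obtain ⟨t, ht⟩ := hdvd
      obtain ⟨mm, hmm⟩ := hodd
      have h1 : n - 1 = 2 * mm := by omega
      rw [h1] at ht
      have htpos : 0 < t := by
        rcases Nat.eq_zero_or_pos t with rfl | h
        · omega
        · exact h
      have ht' : l = mm * t := by
        have h2 : 2 * l = 2 * (mm * t) := by rw [ht]; ring
        omega
      have hch : n.choose 2 = n * mm := by
        rw [Nat.choose_two_right]
        have h3 : n * (n - 1) = n * mm * 2 := by rw [h1]; ring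
        rw [h3, Nat.mul_div_cancel _ (by omega : 0 < 2)]
      have e1 : n.choose 2 * t = n * l := by rw [hch, ht']; ring
      have e2 : n.choose 2 * ((n - 2) * t) = n * (n - 2) * l := by rw [hch, ht']; ring
      rw [← e1, ← e2]
      exact realizable_pairs n t (by omega) htpos
  · rintro ⟨hodd, hnd⟩ hreal
    obtain ⟨G, _, H, K, hH0, hK0, hHi, hKi, hHKi⟩ := hreal
    exact hnd (obstruction H K hn hl hodd hHi hKi hHKi)
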